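/- arXiv:2003.08779 — 3 statements merged into one kernel-verified Lean document; each statement's English description precedes it below -/
import Mathlib

section
/- For every connected simple graph G with α(G) ≥ 2, the optimal proper connection number satisfies pc_opt(G) ≤ 3·α(G) − 2. -/
/-- A set of vertices is independent: pairwise nonadjacent. -/
def IndepSet {V : Type*} (G : SimpleGraph V) (s : Set V) : Prop :=
  s.Pairwise fun u v => ¬ G.Adj u v

/-- The independence number of a graph: the maximum size of an independent set. -/
noncomputable def indepNum {V : Type*} (G : SimpleGraph V) : ℕ :=
  sSup {n | ∃ t : Finset V, IndepSet G ↑t ∧ t.card = n}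

/-- An edge-colored graph is properly connected if between every pair of distinct
vertices there is a path in which no two consecutive edges have the same color. -/
def ProperlyConnected {V : Type*} (G : SimpleGraph V) (c : Sym2 V → ℕ) : Prop :=
  ∀ u v : V, u ≠ v → ∃ p : G.Walk u v, p.IsPath ∧ (p.edges.map c).Chain' (· ≠ ·)

/-- The optimal proper connection number of a monochromatic graph `G` (all edges
initially colored `1`): the minimum of `p + q` over all final colorings `c` making
`G` properly connected, where `p` is the number of recolored edges (edges whose
color is no longer `1`) and `q` is the number of distinct new colors used. -/
noncomputable def pcOpt {V : Type*} (G : SimpleGraph V) : ℕ :=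
  sInf {n | ∃ c : Sym2 V → ℕ, ProperlyConnected G c ∧
    n = {e | e ∈ G.edgeSet ∧ c e ≠ 1}.ncard
      + (c '' {e | e ∈ G.edgeSet ∧ c e ≠ 1}).ncard}

/-- The degree of a vertex. -/
noncomputable def vdeg {V : Type*} (G : SimpleGraph V) (v : V) : ℕ :=
  (G.neighborSet v).ncard

/-- The maximum degree of a graph. -/
noncomputable def maxDeg {V : Type*} (G : SimpleGraph V) : ℕ :=
  sSup {n | ∃ v, vdeg G v = n}

/-- A connected graph is α-minimal if every vertex is either a cut-vertex or its
deletion decreases the independence number. -/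
def AlphaMinimal {V : Type*} (G : SimpleGraph V) : Prop :=
  G.Connected ∧ ∀ v : V,
    ¬ (G.induce ({v}ᶜ : Set V)).Connected ∨
      indepNum (G.induce ({v}ᶜ : Set V)) < indepNum G


/-!
Fix a maximum independent set `I`; it dominates `G`. Grow a set `S` of vertices together with a
colouring in which any two vertices of `S` are joined by a properly coloured path inside `S` whose
end edges at vertices of `I` do not have colour `1`. Since `I` dominates `G`, some `w ∈ I \ S` is
joined to `S` by a path of length at most `3` through vertices outside `S ∪ I`; colouring it
`k + 2`, `(k + 2, 2)` or `(k + 2, 1, 2)`, with `k + 2` a fresh colour, adds `w` to `S` at the cost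
of at most two recoloured edges and one new colour. Once `I ⊆ S`, every other vertex reaches `I`
by an edge of colour `1`, and two nonadjacent such vertices have distinct neighbours in `I`, so
`G` becomes properly connected with at most `2(α - 1)` recoloured edges and `α` new colours
(the fresh ones and `2`).
-/

open Finset
open SimpleGraph (Walk)

section

variable {V : Type*} {G : SimpleGraph V}

section Independence

variable [Fintype V] {I : Finset V}

theorem IndepSet.card_le_indepNum {t : Finset V} (ht : IndepSet G t) : t.card ≤ indepNum G :=
  le_csSup ⟨Fintype.card V, by rintro n ⟨t, -, rfl⟩; exact t.card_le_univ⟩ ⟨t, ht, rfl⟩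

def IsMaxIndepSet (G : SimpleGraph V) (I : Finset V) : Prop :=
  IndepSet G I ∧ I.card = indepNum G

theorem exists_isMaxIndepSet (G : SimpleGraph V) : ∃ I, IsMaxIndepSet G I :=
  Nat.sSup_mem (s := {n | ∃ t : Finset V, IndepSet G ↑t ∧ t.card = n})
    ⟨0, ∅, by simp [IndepSet], rfl⟩ ⟨Fintype.card V, by rintro n ⟨t, -, rfl⟩; exact t.card_le_univ⟩

theorem one_le_indepNum [Nonempty V] : 1 ≤ indepNum G := by
  obtain ⟨v⟩ := ‹Nonempty V›
  simpa using IndepSet.card_le_indepNum (G := G) (t := {v}) (by simp [IndepSet])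

theorem IsMaxIndepSet.exists_adj (hI : IsMaxIndepSet G I) {v : V} (hv : v ∉ I) :
    ∃ w ∈ I, G.Adj v w := by
  classical
  by_contra! h
  have hindep : IndepSet G ↑(insert v I) := by
    rw [coe_insert]
    exact hI.1.insert fun w hw _ => ⟨h w hw, fun hwv => h w hw hwv.symm⟩
  have := hindep.card_le_indepNum
  rw [card_insert_of_notMem hv, hI.2] at this
  omega

/-- Otherwise `u` and `v` could both replace their common neighbour in `I`. -/
theorem IsMaxIndepSet.exists_adj_adj_ne (hI : IsMaxIndepSet G I) {u v : V} (hu : u ∉ I)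
    (hv : v ∉ I) (huv : u ≠ v) (hadj : ¬ G.Adj u v) :
    ∃ w ∈ I, ∃ w' ∈ I, w ≠ w' ∧ G.Adj u w ∧ G.Adj v w' := by
  classical
  by_contra! h
  obtain ⟨w, hw, huw⟩ := hI.exists_adj hu
  have hv_only : ∀ z ∈ I, G.Adj v z → z = w := fun z hz hvz =>
    by_contra fun hzw => h w hw z hz (Ne.symm hzw) huw hvz
  obtain ⟨z, hz, hvz⟩ := hI.exists_adj hv
  have hvw : G.Adj v w := hv_only z hz hvz ▸ hvz
  have hu_only : ∀ z ∈ I, G.Adj u z → z = w := fun z hz huz =>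
    by_contra fun hzw => h z hz w hw hzw huz hvw
  have hindep : IndepSet G ↑(insert u (insert v (I.erase w))) := by
    have hrest : IndepSet G ↑(I.erase w) := hI.1.mono (coe_subset.2 (erase_subset w I))
    simp only [coe_insert]
    refine (hrest.insert fun b hb _ => ?_).insert fun b hb _ => ?_
    · have hbw : b ≠ w := (mem_erase.1 hb).1
      exact ⟨fun hvb => hbw (hv_only b (mem_erase.1 hb).2 hvb),
        fun hbv => hbw (hv_only b (mem_erase.1 hb).2 hbv.symm)⟩
    · rcases hb with rfl | hb
      · exact ⟨hadj, fun h' => hadj h'.symm⟩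
      · have hbw : b ≠ w := (mem_erase.1 hb).1
        exact ⟨fun hub => hbw (hu_only b (mem_erase.1 hb).2 hub),
          fun hbu => hbw (hu_only b (mem_erase.1 hb).2 hbu.symm)⟩
  have := hindep.card_le_indepNum
  rw [card_insert_of_notMem (by simp [huv, hu]), card_insert_of_notMem (by simp [hv]),
    card_erase_of_mem hw, ← hI.2] at this
  have : 0 < I.card := card_pos.2 ⟨w, hw⟩
  omega

end Independence

section ProperPaths

open SimpleGraph.Walk

variable {c : Sym2 V → ℕ} {u v w : V}

def IsProperPath (c : Sym2 V → ℕ) {u v : V} (p : G.Walk u v) : Prop :=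
  p.IsPath ∧ (p.edges.map c).IsChain (· ≠ ·)

theorem IsProperPath.nil : IsProperPath c (Walk.nil : G.Walk u u) :=
  ⟨.nil, by simp⟩

theorem IsProperPath.reverse {p : G.Walk u v} (hp : IsProperPath c p) :
    IsProperPath c p.reverse := by
  refine ⟨hp.1.reverse, ?_⟩
  rw [edges_reverse, List.map_reverse, List.isChain_reverse]
  exact hp.2.imp fun _ _ h => h.symm

theorem IsProperPath.cons {p : G.Walk v w} (hp : IsProperPath c p) (h : G.Adj u v)
    (hu : u ∉ p.support) (hk : (p.edges.map c).head? ≠ some (c s(u, v))) :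
    IsProperPath c (Walk.cons h p) := by
  refine ⟨hp.1.cons hu, ?_⟩
  rw [edges_cons, List.map_cons, List.isChain_cons]
  exact ⟨fun k hk' => by rintro rfl; exact hk hk', hp.2⟩

theorem IsProperPath.concat {p : G.Walk u v} (hp : IsProperPath c p) (h : G.Adj v w)
    (hw : w ∉ p.support) (hk : (p.edges.map c).getLast? ≠ some (c s(v, w))) :
    IsProperPath c (p.concat h) := by
  refine ⟨hp.1.concat hw h, ?_⟩
  rw [edges_concat, List.concat_eq_append, List.map_append]
  refine hp.2.append (List.isChain_singleton _) fun k hk' l hl => ?_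
  rintro rfl
  rw [List.map_singleton, List.head?_singleton, Option.mem_some_iff] at hl
  exact hk (hl ▸ hk')

theorem IsProperPath.single (h : G.Adj u v) : IsProperPath c (Walk.cons h Walk.nil) :=
  IsProperPath.nil.cons h (by simp [h.ne]) (by simp)

def recoloredEdges (G : SimpleGraph V) (c : Sym2 V → ℕ) : Set (Sym2 V) :=
  {e | e ∈ G.edgeSet ∧ c e ≠ 1}

theorem pcOpt_le_of_properlyConnected (hc : ProperlyConnected G c) :
    pcOpt G ≤ (recoloredEdges G c).ncard + (c '' recoloredEdges G c).ncard :=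
  Nat.sInf_le ⟨c, hc, rfl⟩

theorem properlyConnected_iff :
    ProperlyConnected G c ↔ ∀ u v, u ≠ v → ∃ p : G.Walk u v, IsProperPath c p :=
  Iff.rfl

end ProperPaths

section GoodPaths

open SimpleGraph.Walk

variable {I S S' : Finset V} {c c' : Sym2 V → ℕ} {s t u v : V}

/-- At an end in `I` the path must be continuable by an edge of colour `1`: this is how the
vertices outside `S` are attached at the end. -/
structure IsGoodPath (I S : Finset V) (c : Sym2 V → ℕ) {u v : V} (p : G.Walk u v) : Prop where
  isProperPath : IsProperPath c p
  support_subset : ∀ x ∈ p.support, x ∈ S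
  head_ne : u ∈ I → (p.edges.map c).head? ≠ some 1
  getLast_ne : v ∈ I → (p.edges.map c).getLast? ≠ some 1

theorem IsGoodPath.reverse {p : G.Walk u v} (hp : IsGoodPath I S c p) :
    IsGoodPath I S c p.reverse where
  isProperPath := hp.isProperPath.reverse
  support_subset x hx := hp.support_subset x (by simpa using hx)
  head_ne hv := by simpa [edges_reverse, List.head?_reverse] using hp.getLast_ne hv
  getLast_ne hu := by simpa [edges_reverse, List.getLast?_reverse] using hp.head_ne hu

theorem IsGoodPath.mono {p : G.Walk u v} (hp : IsGoodPath I S c p) (hSS' : S ⊆ S') :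
    IsGoodPath I S' c p :=
  { hp with support_subset := fun x hx => hSS' (hp.support_subset x hx) }

theorem IsGoodPath.congr {p : G.Walk u v} (hp : IsGoodPath I S c p)
    (hcc : ∀ e ∈ G.edgeSet, (∀ x ∈ e, x ∈ S) → c' e = c e) : IsGoodPath I S c' p := by
  have hmap : p.edges.map c' = p.edges.map c := List.map_congr_left fun e he =>
    hcc e (p.edges_subset_edgeSet he) fun x hx =>
      hp.support_subset x (Walk.mem_support_of_mem_edges he hx)
  exact ⟨⟨hp.isProperPath.1, hmap ▸ hp.isProperPath.2⟩, hp.support_subset,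
    hmap ▸ hp.head_ne, hmap ▸ hp.getLast_ne⟩

variable (G) in
def GoodConnected (I S : Finset V) (c : Sym2 V → ℕ) : Prop :=
  ∀ u ∈ S, ∀ v ∈ S, u ≠ v → ∃ p : G.Walk u v, IsGoodPath I S c p

variable (G) in
def GoodPathsInto (I S : Finset V) (c : Sym2 V → ℕ) (t : V) (k : ℕ) : Prop :=
  ∀ σ ∈ S, σ ≠ t → ∃ p : G.Walk σ t, IsGoodPath I S c p ∧ (p.edges.map c).getLast? ≠ some k

theorem GoodConnected.congr (h : GoodConnected G I S c)
    (hcc : ∀ e ∈ G.edgeSet, (∀ x ∈ e, x ∈ S) → c' e = c e) : GoodConnected G I S c' :=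
  fun u hu v hv huv => (h u hu v hv huv).imp fun _ hp => hp.congr hcc

theorem GoodConnected.goodPathsInto (h : GoodConnected G I S c) (hs : s ∈ S) {k : ℕ}
    (hk : ∀ e ∈ G.edgeSet, (∀ x ∈ e, x ∈ S) → c e ≠ k) : GoodPathsInto G I S c s k := by
  intro σ hσ hσs
  obtain ⟨p, hp⟩ := h σ hσ s hs hσs
  refine ⟨p, hp, fun hlast => ?_⟩
  obtain ⟨e, he, hek⟩ := List.mem_map.1 (List.mem_of_mem_getLast? hlast)
  exact hk e (p.edges_subset_edgeSet he)
    (fun x hx => hp.support_subset x (Walk.mem_support_of_mem_edges he hx)) hek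

theorem IsGoodPath.concat [DecidableEq V] {p : G.Walk u s} (hp : IsGoodPath I S c p)
    (hus : u ≠ s) (hst : G.Adj s t) (ht : t ∉ S)
    (hlast : (p.edges.map c).getLast? ≠ some (c s(s, t))) (htI : t ∈ I → c s(s, t) ≠ 1) :
    IsGoodPath I (insert t S) c (p.concat hst) := by
  have hne : p.edges.map c ≠ [] := by simpa [edges_eq_nil] using not_nil_of_ne hus
  refine ⟨hp.isProperPath.concat hst (fun h => ht (hp.support_subset _ h)) hlast, ?_, ?_, ?_⟩
  · simp only [support_concat, List.mem_append, List.mem_singleton, mem_insert]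
    rintro x (hx | rfl)
    · exact .inr (hp.support_subset x hx)
    · exact .inl rfl
  · simpa [edges_concat, List.head?_append_of_ne_nil _ hne] using hp.head_ne
  · simpa [edges_concat] using htI

theorem GoodConnected.attach [DecidableEq V] (h : GoodConnected G I S c) (hs : s ∈ S)
    (ht : t ∉ S) (hst : G.Adj s t) {k : ℕ} (hk : c s(s, t) = k)
    (hinto : GoodPathsInto G I S c s k) (hI : s ∈ I ∨ t ∈ I → k ≠ 1) :
    GoodConnected G I (insert t S) c ∧ ∀ k' ≠ k, GoodPathsInto G I (insert t S) c t k' := by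
  have hpaths : ∀ σ ∈ S, ∃ p : G.Walk σ t,
      IsGoodPath I (insert t S) c p ∧ (p.edges.map c).getLast? = some k := by
    intro σ hσ
    by_cases hσs : σ = s
    · subst hσs
      refine ⟨.cons hst .nil, ⟨.single hst, ?_, ?_, ?_⟩, by simp [hk]⟩
      · simp [hσ]
      · simpa [hk] using fun hσI => hI (.inl hσI)
      · simpa [hk] using fun htI => hI (.inr htI)
    obtain ⟨p, hp, hlast⟩ := hinto σ hσ hσs
    exact ⟨p.concat hst, hp.concat hσs hst ht (hk ▸ hlast) (hk ▸ fun htI => hI (.inr htI)),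
      by simp [edges_concat, hk]⟩
  refine ⟨fun u hu v hv huv => ?_, fun k' hk' σ hσ hσt => ?_⟩
  · rcases mem_insert.1 hu with rfl | huS
    · obtain ⟨p, hp, -⟩ := hpaths v ((mem_insert.1 hv).resolve_left huv.symm)
      exact ⟨p.reverse, hp.reverse⟩
    rcases mem_insert.1 hv with rfl | hvS
    · obtain ⟨p, hp, -⟩ := hpaths u huS
      exact ⟨p, hp⟩
    · obtain ⟨p, hp⟩ := h u huS v hvS huv
      exact ⟨p, hp.mono (subset_insert _ S)⟩
  · obtain ⟨p, hp, hlast⟩ := hpaths σ ((mem_insert.1 hσ).resolve_left hσt)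
    exact ⟨p, hp, by rw [hlast]; exact fun h => hk' (Option.some_injective _ h).symm⟩

end GoodPaths

section Construction

variable [DecidableEq V] {I S : Finset V} {c : Sym2 V → ℕ} {u v w : V}

structure GoodColoring (G : SimpleGraph V) (I S : Finset V) (c : Sym2 V → ℕ) : Prop where
  recolored_subset : ∀ e ∈ recoloredEdges G c, ∀ x ∈ e, x ∈ S
  color_mem : ∀ e ∈ recoloredEdges G c, c e ∈ Icc 2 ((I ∩ S).card + 1)
  ncard_recolored : (recoloredEdges G c).ncard + 2 ≤ 2 * (I ∩ S).card
  goodConnected : GoodConnected G I S c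

theorem goodColoring_singleton (hw : w ∈ I) : GoodColoring G I {w} (fun _ => 1) where
  recolored_subset _ he := absurd rfl he.2
  color_mem _ he := absurd rfl he.2
  ncard_recolored := by simp [recoloredEdges, inter_singleton_of_mem hw]
  goodConnected u hu v hv huv := absurd ((mem_singleton.1 hu).trans (mem_singleton.1 hv).symm) huv

theorem GoodColoring.one_le_card (hc : GoodColoring G I S c) : 1 ≤ (I ∩ S).card := by
  have := hc.ncard_recolored
  omega

theorem GoodColoring.color_eq_one (hc : GoodColoring G I S c) (hu : u ∉ S) (huv : G.Adj u v) :
    c s(u, v) = 1 :=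
  by_contra fun h => hu (hc.recolored_subset _ ⟨huv, h⟩ u (Sym2.mem_mk_left u v))

theorem GoodColoring.color_ne_fresh (hc : GoodColoring G I S c) {e : Sym2 V}
    (he : e ∈ G.edgeSet) : c e ≠ (I ∩ S).card + 2 := by
  by_cases h1 : c e = 1
  · rw [h1]; omega
  · have := (mem_Icc.1 (hc.color_mem e ⟨he, h1⟩)).2
    omega

theorem GoodColoring.pcOpt_le (hc : GoodColoring G I S c) (hpc : ProperlyConnected G c) :
    pcOpt G ≤ 3 * (I ∩ S).card - 2 := by
  have hcolors : (c '' recoloredEdges G c).ncard ≤ (I ∩ S).card := by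
    calc (c '' recoloredEdges G c).ncard
        ≤ (↑(Icc 2 ((I ∩ S).card + 1)) : Set ℕ).ncard :=
          Set.ncard_le_ncard (by rintro _ ⟨e, he, rfl⟩; exact hc.color_mem e he) (Set.toFinite _)
      _ = (I ∩ S).card := by simp
  have := hc.ncard_recolored
  have := pcOpt_le_of_properlyConnected hpc
  omega

theorem GoodColoring.exists_properPath_of_notMem_of_mem [Fintype V] (hc : GoodColoring G I S c)
    (hI : IsMaxIndepSet G I) (hIS : I ⊆ S) (hu : u ∉ S) (hv : v ∈ S) (huv : ¬ G.Adj u v) :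
    ∃ p : G.Walk u v, IsProperPath c p := by
  obtain ⟨w, hwI, huw⟩ := hI.exists_adj fun h => hu (hIS h)
  obtain ⟨p, hp⟩ := hc.goodConnected w (hIS hwI) v hv (by rintro rfl; exact huv huw)
  exact ⟨.cons huw p, hp.isProperPath.cons huw (fun h => hu (hp.support_subset u h))
    (hc.color_eq_one hu huw ▸ hp.head_ne hwI)⟩

theorem GoodColoring.exists_properPath_of_notMem_of_notMem [Fintype V]
    (hc : GoodColoring G I S c) (hI : IsMaxIndepSet G I) (hIS : I ⊆ S) (hu : u ∉ S) (hv : v ∉ S)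
    (huv : u ≠ v) (hadj : ¬ G.Adj u v) : ∃ p : G.Walk u v, IsProperPath c p := by
  obtain ⟨w, hwI, w', hw'I, hww', huw, hvw'⟩ :=
    hI.exists_adj_adj_ne (fun h => hu (hIS h)) (fun h => hv (hIS h)) huv hadj
  obtain ⟨p, hp⟩ := hc.goodConnected w (hIS hwI) w' (hIS hw'I) hww'
  have hq : IsGoodPath I (insert v S) c (p.concat hvw'.symm) := by
    refine hp.concat hww' hvw'.symm hv ?_ fun h => absurd (hIS h) hv
    rw [Sym2.eq_swap, hc.color_eq_one hv hvw']
    exact hp.getLast_ne hw'I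
  refine ⟨.cons huw (p.concat hvw'.symm), hq.isProperPath.cons huw ?_ ?_⟩
  · exact fun h => by simpa [huv, hu] using hq.support_subset u h
  · exact hc.color_eq_one hu huw ▸ hq.head_ne hwI

theorem GoodColoring.properlyConnected [Fintype V] (hc : GoodColoring G I S c)
    (hI : IsMaxIndepSet G I) (hIS : I ⊆ S) : ProperlyConnected G c := by
  refine properlyConnected_iff.2 fun u v huv => ?_
  by_cases hadj : G.Adj u v
  · exact ⟨_, .single hadj⟩
  by_cases hu : u ∈ S <;> by_cases hv : v ∈ S
  · obtain ⟨p, hp⟩ := hc.goodConnected u hu v hv huv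
    exact ⟨p, hp.isProperPath⟩
  · obtain ⟨p, hp⟩ := hc.exists_properPath_of_notMem_of_mem hI hIS hv hu (fun h => hadj h.symm)
    exact ⟨p.reverse, hp.reverse⟩
  · exact hc.exists_properPath_of_notMem_of_mem hI hIS hu hv hadj
  · exact hc.exists_properPath_of_notMem_of_notMem hI hIS hu hv huv hadj

end Construction

section Recoloring

open Function

variable [DecidableEq V] {I S S' : Finset V} {c : Sym2 V → ℕ} {s w : V}

/-- Colour `2` is shared by all extension steps, while the step at `|I ∩ S| = k` recolours one
edge with the fresh colour `k + 2`. -/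
def recolor (c : Sym2 V → ℕ) (k : ℕ) (e₁ e₂ : Sym2 V) : Sym2 V → ℕ :=
  update (update c e₂ 2) e₁ (k + 2)

theorem recolor_apply_left (c : Sym2 V → ℕ) (k : ℕ) (e₁ e₂ : Sym2 V) :
    recolor c k e₁ e₂ e₁ = k + 2 :=
  update_self _ _ _

theorem recolor_apply_right (c : Sym2 V → ℕ) (k : ℕ) {e₁ e₂ : Sym2 V} (h : e₂ ≠ e₁) :
    recolor c k e₁ e₂ e₂ = 2 := by
  rw [recolor, update_of_ne h, update_self]

theorem recolor_apply_of_ne (c : Sym2 V → ℕ) (k : ℕ) {e e₁ e₂ : Sym2 V} (h₁ : e ≠ e₁)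
    (h₂ : e ≠ e₂) : recolor c k e₁ e₂ e = c e := by
  rw [recolor, update_of_ne h₁, update_of_ne h₂]

theorem recoloredEdges_recolor_subset (c : Sym2 V → ℕ) (k : ℕ) (e₁ e₂ : Sym2 V) :
    recoloredEdges G (recolor c k e₁ e₂) ⊆ insert e₁ (insert e₂ (recoloredEdges G c)) := by
  rintro e ⟨he, hne⟩
  by_cases h₁ : e = e₁
  · exact .inl h₁
  by_cases h₂ : e = e₂
  · exact .inr (.inl h₂)
  exact .inr (.inr ⟨he, by rwa [recolor_apply_of_ne c k h₁ h₂] at hne⟩)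

theorem card_inter_insert_of_mem (hwI : w ∈ I) (hwS : w ∉ S) :
    (I ∩ insert w S).card = (I ∩ S).card + 1 := by
  rw [inter_insert_of_mem hwI, card_insert_of_notMem fun h => hwS (mem_inter.1 h).2]

theorem GoodColoring.goodConnected_recolor (hc : GoodColoring G I S c) {e₁ e₂ : Sym2 V}
    {x₁ x₂ : V} (hx₁ : x₁ ∈ e₁) (hx₁S : x₁ ∉ S) (hx₂ : x₂ ∈ e₂) (hx₂S : x₂ ∉ S) (hs : s ∈ S) :
    GoodConnected G I S (recolor c (I ∩ S).card e₁ e₂) ∧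
      GoodPathsInto G I S (recolor c (I ∩ S).card e₁ e₂) s ((I ∩ S).card + 2) := by
  have hagree : ∀ e ∈ G.edgeSet, (∀ z ∈ e, z ∈ S) → recolor c (I ∩ S).card e₁ e₂ e = c e :=
    fun e _ he => recolor_apply_of_ne c _ (by rintro rfl; exact hx₁S (he x₁ hx₁))
      (by rintro rfl; exact hx₂S (he x₂ hx₂))
  have hconn := hc.goodConnected.congr hagree
  exact ⟨hconn, hconn.goodPathsInto hs fun e he hin => hagree e he hin ▸ hc.color_ne_fresh he⟩

theorem GoodColoring.recolor_of_goodConnected [Fintype V] (hc : GoodColoring G I S c) {e₁ e₂ : Sym2 V}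
    (hSS' : S ⊆ S') (hcard : (I ∩ S').card = (I ∩ S).card + 1) (he₁ : ∀ z ∈ e₁, z ∈ S')
    (he₂ : ∀ z ∈ e₂, z ∈ S') (hconn : GoodConnected G I S' (recolor c (I ∩ S).card e₁ e₂)) :
    GoodColoring G I S' (recolor c (I ∩ S).card e₁ e₂) where
  recolored_subset e he := by
    rcases recoloredEdges_recolor_subset c _ e₁ e₂ he with rfl | rfl | he'
    · exact he₁
    · exact he₂
    · exact fun z hz => hSS' (hc.recolored_subset e he' z hz)
  color_mem e he := by
    rw [hcard, mem_Icc]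
    by_cases h₁ : e = e₁
    · rw [h₁, recolor_apply_left]; omega
    by_cases h₂ : e = e₂
    · rw [h₂, recolor_apply_right _ _ (h₂ ▸ h₁)]; omega
    have he' : e ∈ recoloredEdges G c :=
      ((recoloredEdges_recolor_subset c _ e₁ e₂ he).resolve_left h₁).resolve_left h₂
    have := mem_Icc.1 (hc.color_mem e he')
    rw [recolor_apply_of_ne c _ h₁ h₂]
    omega
  ncard_recolored := by
    have := hc.ncard_recolored
    have := Set.ncard_le_ncard (recoloredEdges_recolor_subset (G := G) c (I ∩ S).card e₁ e₂)
      (Set.toFinite _)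
    have := Set.ncard_insert_le e₁ (insert e₂ (recoloredEdges G c))
    have := Set.ncard_insert_le e₂ (recoloredEdges G c)
    omega
  goodConnected := hconn

end Recoloring

section Growth

variable [Fintype V] [DecidableEq V] {I S : Finset V} {c : Sym2 V → ℕ} {s w x y : V}

theorem IsMaxIndepSet.exists_link (hG : G.Connected) (hI : IsMaxIndepSet G I) (hS : S.Nonempty)
    (hIS : ¬ I ⊆ S) :
    ∃ s ∈ S, ∃ w ∈ I, w ∉ S ∧ (G.Adj s w ∨
      (∃ x ∉ S, x ∉ I ∧ G.Adj s x ∧ G.Adj x w) ∨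
      ∃ x ∉ S, x ∉ I ∧ ∃ y ∉ S, y ∉ I ∧ G.Adj s x ∧ G.Adj x y ∧ G.Adj y w) := by
  obtain ⟨w₀, hw₀I, hw₀S⟩ := not_subset.1 hIS
  obtain ⟨s₀, hs₀⟩ := hS
  -- a walk from `S` to `w₀` leaves the set of vertices of `S` and their neighbours outside `I`
  obtain ⟨d, -, hd, hd'⟩ := (hG.preconnected s₀ w₀).some.exists_boundary_dart
    {v | v ∈ S ∨ (v ∉ I ∧ ∃ s ∈ S, G.Adj s v)} (.inl hs₀) (by simp [hw₀S, hw₀I])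
  simp only [Set.mem_ofPred_eq, not_or, not_and, not_exists] at hd hd'
  obtain ⟨hyS, hy⟩ := hd'
  by_cases hxS : d.fst ∈ S
  · have hyI : d.snd ∈ I := by_contra fun hyI => hy hyI d.fst hxS d.adj
    exact ⟨d.fst, hxS, d.snd, hyI, hyS, .inl d.adj⟩
  obtain ⟨hxI, s, hs, hsx⟩ := hd.resolve_left hxS
  by_cases hyI : d.snd ∈ I
  · exact ⟨s, hs, d.snd, hyI, hyS, .inr (.inl ⟨d.fst, hxS, hxI, hsx, d.adj⟩)⟩
  obtain ⟨w, hwI, hyw⟩ := hI.exists_adj hyI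
  have hwS : w ∉ S := fun hwS => hy hyI w hwS hyw.symm
  exact ⟨s, hs, w, hwI, hwS, .inr (.inr ⟨d.fst, hxS, hxI, d.snd, hyS, hyI, hsx, d.adj, hyw⟩)⟩

theorem GoodColoring.exists_succ_of_adj (hc : GoodColoring G I S c) (hs : s ∈ S) (hwI : w ∈ I)
    (hwS : w ∉ S) (hsw : G.Adj s w) :
    ∃ S' c', GoodColoring G I S' c' ∧ (I ∩ S').card = (I ∩ S).card + 1 := by
  have hcard := card_inter_insert_of_mem hwI hwS
  obtain ⟨h₀, hinto₀⟩ := hc.goodConnected_recolor (Sym2.mem_mk_right s w) hwS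
    (Sym2.mem_mk_right s w) hwS hs
  obtain ⟨h₁, -⟩ := h₀.attach hs hwS hsw (recolor_apply_left ..) hinto₀ (by omega)
  exact ⟨_, _, hc.recolor_of_goodConnected (subset_insert w S) hcard (by simp [hs])
    (by simp [hs]) h₁, hcard⟩

theorem GoodColoring.exists_succ_of_adj_adj (hc : GoodColoring G I S c) (hs : s ∈ S)
    (hx : x ∉ S) (hxI : x ∉ I) (hwI : w ∈ I) (hwS : w ∉ S) (hsx : G.Adj s x) (hxw : G.Adj x w) :
    ∃ S' c', GoodColoring G I S' c' ∧ (I ∩ S').card = (I ∩ S).card + 1 := by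
  have hcard : (I ∩ insert w (insert x S)).card = (I ∩ S).card + 1 := by
    rw [card_inter_insert_of_mem hwI (by simp [hwS, hxw.ne.symm]), inter_insert_of_notMem hxI]
  have hs_ne : ∀ {z}, z ∉ S → s ≠ z := fun hz h => hz (h ▸ hs)
  have hxw_sx : s(x, w) ≠ s(s, x) := by simp [(hs_ne hx).symm, (hs_ne hwS).symm]
  obtain ⟨h₀, hinto₀⟩ := hc.goodConnected_recolor (Sym2.mem_mk_right s x) hx
    (Sym2.mem_mk_left x w) hx hs
  obtain ⟨h₁, hinto₁⟩ := h₀.attach hs hx hsx (recolor_apply_left ..) hinto₀ (by omega)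
  obtain ⟨h₂, -⟩ := h₁.attach (mem_insert_self x S) (by simp [hwS, hxw.ne.symm]) hxw
    (recolor_apply_right _ _ hxw_sx) (hinto₁ 2 (by have := hc.one_le_card; omega)) (by omega)
  exact ⟨_, _, hc.recolor_of_goodConnected (by intro; simp +contextual) hcard (by simp [hs])
    (by simp) h₂, hcard⟩

theorem GoodColoring.exists_succ_of_adj_adj_adj (hc : GoodColoring G I S c) (hs : s ∈ S)
    (hx : x ∉ S) (hxI : x ∉ I) (hy : y ∉ S) (hyI : y ∉ I) (hwI : w ∈ I) (hwS : w ∉ S)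
    (hsx : G.Adj s x) (hxy : G.Adj x y) (hyw : G.Adj y w) :
    ∃ S' c', GoodColoring G I S' c' ∧ (I ∩ S').card = (I ∩ S).card + 1 := by
  have hxw : x ≠ w := by rintro rfl; exact hxI hwI
  have hcard : (I ∩ insert w (insert y (insert x S))).card = (I ∩ S).card + 1 := by
    rw [card_inter_insert_of_mem hwI (by simp [hwS, hyw.ne.symm, hxw.symm]),
      inter_insert_of_notMem hyI, inter_insert_of_notMem hxI]
  have hs_ne : ∀ {z}, z ∉ S → s ≠ z := fun hz h => hz (h ▸ hs)
  obtain ⟨h₀, hinto₀⟩ := hc.goodConnected_recolor (Sym2.mem_mk_right s x) hx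
    (Sym2.mem_mk_left y w) hy hs
  have hxy_one : recolor c (I ∩ S).card s(s, x) s(y, w) s(x, y) = 1 := by
    rw [recolor_apply_of_ne _ _ (by simp [(hs_ne hx).symm, (hs_ne hy).symm])
      (by simp [hxy.ne, hxw]), hc.color_eq_one hx hxy]
  obtain ⟨h₁, hinto₁⟩ := h₀.attach hs hx hsx (recolor_apply_left ..) hinto₀ (by omega)
  obtain ⟨h₂, hinto₂⟩ := h₁.attach (mem_insert_self x S) (by simp [hy, hxy.ne.symm]) hxy
    hxy_one (hinto₁ 1 (by omega)) (by simp [hxI, hyI])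
  obtain ⟨h₃, -⟩ := h₂.attach (mem_insert_self y _) (by simp [hwS, hyw.ne.symm, hxw.symm]) hyw
    (recolor_apply_right _ _ (by simp [(hs_ne hy).symm, (hs_ne hwS).symm]))
    (hinto₂ 2 (by omega)) (by omega)
  exact ⟨_, _, hc.recolor_of_goodConnected (by intro; simp +contextual) hcard (by simp [hs])
    (by simp) h₃, hcard⟩

theorem GoodColoring.exists_succ (hc : GoodColoring G I S c) (hG : G.Connected)
    (hI : IsMaxIndepSet G I) (hIS : ¬ I ⊆ S) :
    ∃ S' c', GoodColoring G I S' c' ∧ (I ∩ S').card = (I ∩ S).card + 1 := by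
  have hS : S.Nonempty := by
    obtain ⟨v, hv⟩ := card_pos.1 hc.one_le_card
    exact ⟨v, (mem_inter.1 hv).2⟩
  obtain ⟨s, hs, w, hwI, hwS, hsw | ⟨x, hx, hxI, hsx, hxw⟩ |
    ⟨x, hx, hxI, y, hy, hyI, hsx, hxy, hyw⟩⟩ := hI.exists_link hG hS hIS
  · exact hc.exists_succ_of_adj hs hwI hwS hsw
  · exact hc.exists_succ_of_adj_adj hs hx hxI hwI hwS hsx hxw
  · exact hc.exists_succ_of_adj_adj_adj hs hx hxI hy hyI hwI hwS hsx hxy hyw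

theorem exists_goodColoring (hG : G.Connected) (hI : IsMaxIndepSet G I) {k : ℕ} (hk : 1 ≤ k)
    (hkI : k ≤ I.card) : ∃ S c, GoodColoring G I S c ∧ (I ∩ S).card = k := by
  induction k, hk using Nat.le_induction with
  | base =>
    obtain ⟨w, hw⟩ := card_pos.1 hkI
    exact ⟨{w}, _, goodColoring_singleton hw, by rw [inter_singleton_of_mem hw, card_singleton]⟩
  | succ k _ ih =>
    obtain ⟨S, c, hc, rfl⟩ := ih (by omega)
    refine hc.exists_succ hG hI fun hIS => ?_
    rw [inter_eq_left.2 hIS] at hkI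
    omega

end Growth

end

theorem pcOpt_le_three_alpha_sub_two_general {V : Type*} [Fintype V] (G : SimpleGraph V)
    (hG : G.Connected) :
    pcOpt G ≤ 3 * indepNum G - 2 := by
  classical
  obtain ⟨I, hI⟩ := exists_isMaxIndepSet G
  have : Nonempty V := hG.nonempty
  obtain ⟨S, c, hc, hcard⟩ := exists_goodColoring hG hI (hI.2 ▸ one_le_indepNum) le_rfl
  have hIS : I ⊆ S := inter_eq_left.1 (eq_of_subset_of_card_le inter_subset_left hcard.ge)
  calc pcOpt G ≤ 3 * (I ∩ S).card - 2 := hc.pcOpt_le (hc.properlyConnected hI hIS)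
    _ = 3 * indepNum G - 2 := by rw [hcard, hI.2]

/-- For every connected graph `G` with `α(G) ≥ 2`, `pc_opt(G) ≤ 3α(G) − 2`. -/
theorem pcOpt_le_three_alpha_sub_two {V : Type*} [Fintype V] (G : SimpleGraph V)
    (hG : G.Connected) (hα : 2 ≤ indepNum G) :
    pcOpt G ≤ 3 * indepNum G - 2 :=
  pcOpt_le_three_alpha_sub_two_general G hG
end

section
/- Let G be a connected simple graph with α(G) = 3. If the vertex set of G can be partitioned into three cliques, then pc_opt(G) ≤ 4. -/
/-!
An independent set meets a clique in at most one vertex, so `α(G) = 3` forces all three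
cliques to be nonempty, and connectivity then makes one of them, `X`, adjacent to both
others, say through edges `x₀y₀` and `x₁z₁`. Recolor these two edges with two new colors
`2` and `3`, at cost `2 + 2`. A path that alternates between at most one edge inside a
clique (color `1`) and a bridge (color `2` or `3`) is properly colored, and the route
`Y → y₀ → x₀ → x₁ → z₁ → Z` and its pieces connect every pair of vertices in this way.
-/

open SimpleGraph (Walk)

theorem List.isChain_ne_append_cons {α : Type*} {l₁ l₂ : List α} {k : α}
    (h₁ : l₁.IsChain (· ≠ ·)) (h₂ : l₂.IsChain (· ≠ ·)) (hk₁ : k ∉ l₁) (hk₂ : k ∉ l₂) :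
    (l₁ ++ k :: l₂).IsChain (· ≠ ·) := by
  refine h₁.append (h₂.cons fun y hy h => hk₂ ?_) fun x hx y hy h => hk₁ ?_
  · exact h ▸ List.mem_of_mem_head? hy
  · obtain rfl : y = k := by simpa using hy.symm
    exact h ▸ List.mem_of_mem_getLast? hx

theorem hub_of_three {α : Type*} {R : α → α → Prop} (hR : ∀ {x y}, R x y → R y x)
    {a b c : α} (ha : R a b ∨ R a c) (hb : R b a ∨ R b c) (hc : R c a ∨ R c b) :
    (R a b ∧ R a c) ∨ (R b a ∧ R b c) ∨ (R c a ∧ R c b) := by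
  have hab : R b a ↔ R a b := ⟨hR, hR⟩
  have hac : R c a ↔ R a c := ⟨hR, hR⟩
  have hbc : R c b ↔ R b c := ⟨hR, hR⟩
  simp only [hab, hac, hbc] at hb hc ⊢
  tauto

section

variable {V : Type*} {G : SimpleGraph V}

theorem Sym2.mk_ne_of_mem_of_not_mem {S : Set V} {x y a b : V} (hx : x ∈ S) (hy : y ∈ S)
    (hab : a ∉ S ∨ b ∉ S) : s(x, y) ≠ s(a, b) := by
  intro h
  rcases Sym2.eq_iff.1 h with ⟨rfl, rfl⟩ | ⟨rfl, rfl⟩ <;> tauto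

theorem indepNum_le_two_of_isClique_cover {B C : Set V} (hB : G.IsClique B)
    (hC : G.IsClique C) (hcov : ∀ v, v ∈ B ∨ v ∈ C) : indepNum G ≤ 2 := by
  classical
  refine csSup_le' ?_
  rintro _ ⟨t, ht, rfl⟩
  have hclique : ∀ S : Set V, G.IsClique S → (t.filter (· ∈ S)).card ≤ 1 := fun S hS =>
    Finset.card_le_one.2 fun x hx y hy => by
      simp only [Finset.mem_filter] at hx hy
      by_contra hxy
      exact ht hx.1 hy.1 hxy (hS hx.2 hy.2 hxy)
  have hsplit : t = t.filter (· ∈ B) ∪ t.filter (· ∈ C) := by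
    rw [← Finset.filter_or, Finset.filter_true_of_mem fun v _ => hcov v]
  calc t.card ≤ (t.filter (· ∈ B)).card + (t.filter (· ∈ C)).card :=
        (congrArg Finset.card hsplit).le.trans (Finset.card_union_le _ _)
    _ ≤ 2 := by linarith [hclique B hB, hclique C hC]

theorem nonempty_of_indepNum_eq_three {A B C : Set V} (hα : indepNum G = 3)
    (hB : G.IsClique B) (hC : G.IsClique C) (hcov : ∀ v, v ∈ A ∨ v ∈ B ∨ v ∈ C) :
    A.Nonempty := by
  by_contra hA
  have := indepNum_le_two_of_isClique_cover hB hC fun v =>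
    (hcov v).resolve_left fun hv => hA ⟨v, hv⟩
  omega

def AdjBetween (G : SimpleGraph V) (S T : Set V) : Prop :=
  ∃ s ∈ S, ∃ t ∈ T, G.Adj s t

theorem AdjBetween.symm {S T : Set V} : AdjBetween G S T → AdjBetween G T S
  | ⟨s, hs, t, ht, h⟩ => ⟨t, ht, s, hs, h.symm⟩

theorem SimpleGraph.Connected.adjBetween_or {S T U : Set V} (hG : G.Connected)
    (hS : S.Nonempty) (hT : T.Nonempty) (hST : Disjoint S T)
    (hcov : ∀ v, v ∈ S ∨ v ∈ T ∨ v ∈ U) : AdjBetween G S T ∨ AdjBetween G S U := by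
  obtain ⟨a, ha⟩ := hS
  obtain ⟨b, hb⟩ := hT
  obtain ⟨p⟩ := hG.preconnected a b
  obtain ⟨d, -, hd, hd'⟩ := p.exists_boundary_dart S ha (hST.notMem_of_mem_right hb)
  exact ((hcov d.snd).resolve_left hd').imp (fun h => ⟨_, hd, _, h, d.adj⟩)
    (fun h => ⟨_, hd, _, h, d.adj⟩)

def HasProperPath (G : SimpleGraph V) (c : Sym2 V → ℕ) (u v : V) : Prop :=
  ∃ p : G.Walk u v, p.IsPath ∧ (p.edges.map c).IsChain (· ≠ ·)

theorem HasProperPath.symm {c : Sym2 V → ℕ} {u v : V} :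
    HasProperPath G c u v → HasProperPath G c v u
  | ⟨p, hp, hc⟩ => ⟨p.reverse, hp.reverse, by
      rw [Walk.edges_reverse, List.map_reverse, List.isChain_reverse]
      exact hc.imp fun _ _ h => Ne.symm h⟩

structure IsProperPathIn (c : Sym2 V → ℕ) (S : Set V) (K : Set ℕ) {u v : V}
    (p : G.Walk u v) : Prop where
  isPath : p.IsPath
  isChain : (p.edges.map c).IsChain (· ≠ ·)
  support_subset : ∀ x ∈ p.support, x ∈ S
  color_mem : ∀ e ∈ p.edges, c e ∈ K

namespace IsProperPathIn

variable {c : Sym2 V → ℕ} {S T : Set V} {K L : Set ℕ}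

theorem hasProperPath {u v : V} {p : G.Walk u v} (hp : IsProperPathIn c S K p) :
    HasProperPath G c u v :=
  ⟨p, hp.isPath, hp.isChain⟩

theorem notMem_map_edges {u v : V} {p : G.Walk u v} (hp : IsProperPathIn c S K p) {k : ℕ}
    (hk : k ∉ K) : k ∉ p.edges.map c := by
  simp only [List.mem_map, not_exists, not_and]
  exact fun e he h => hk (h ▸ hp.color_mem e he)

theorem append_cons {u a b v : V} {p : G.Walk u a} {q : G.Walk b v} {k : ℕ}
    (hp : IsProperPathIn c S K p) (hq : IsProperPathIn c T L q) (hST : Disjoint S T)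
    (hab : G.Adj a b) (hk : c s(a, b) = k) (hkK : k ∉ K) (hkL : k ∉ L) :
    IsProperPathIn c (S ∪ T) (insert k (K ∪ L)) (p.append (.cons hab q)) where
  isPath := by
    rw [Walk.isPath_def, Walk.support_append, Walk.support_cons, List.tail_cons]
    refine hp.isPath.support_nodup.append hq.isPath.support_nodup fun x hx hx' => ?_
    exact Set.disjoint_left.1 hST (hp.support_subset x hx) (hq.support_subset x hx')
  isChain := by
    rw [Walk.edges_append, Walk.edges_cons, List.map_append, List.map_cons, hk]
    exact List.isChain_ne_append_cons hp.isChain hq.isChain (hp.notMem_map_edges hkK)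
      (hq.notMem_map_edges hkL)
  support_subset x hx := by
    rw [Walk.support_append, Walk.support_cons, List.tail_cons, List.mem_append] at hx
    exact hx.imp (hp.support_subset x) (hq.support_subset x)
  color_mem e he := by
    rw [Walk.edges_append, Walk.edges_cons, List.mem_append, List.mem_cons] at he
    rcases he with he | rfl | he
    · exact Or.inr (Or.inl (hp.color_mem e he))
    · exact Or.inl hk
    · exact Or.inr (Or.inr (hq.color_mem e he))

end IsProperPathIn

theorem SimpleGraph.IsClique.exists_isProperPathIn {S : Set V} (hS : G.IsClique S)
    {c : Sym2 V → ℕ} (hc : ∀ x ∈ S, ∀ y ∈ S, c s(x, y) = 1) {u v : V} (hu : u ∈ S)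
    (hv : v ∈ S) : ∃ p : G.Walk u v, IsProperPathIn c S {1} p := by
  by_cases huv : u = v
  · subst huv
    exact ⟨.nil, by simp, by simp, by simpa using hu, by simp⟩
  · exact ⟨.cons (hS hu hv huv) .nil, by simp [huv], by simp, by simp [hu, hv],
      by simp [hc u hu v hv]⟩

theorem SimpleGraph.IsClique.hasProperPath {S : Set V} (hS : G.IsClique S)
    {c : Sym2 V → ℕ} (hc : ∀ x ∈ S, ∀ y ∈ S, c s(x, y) = 1) {u v : V} (hu : u ∈ S)
    (hv : v ∈ S) : HasProperPath G c u v :=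
  (hS.exists_isProperPathIn hc hu hv).elim fun _ hp => hp.hasProperPath

theorem properlyConnected_of_cover {c : Sym2 V → ℕ} {X Y Z : Set V}
    (hcov : ∀ v, v ∈ X ∨ v ∈ Y ∨ v ∈ Z)
    (hXX : ∀ u ∈ X, ∀ v ∈ X, HasProperPath G c u v)
    (hYY : ∀ u ∈ Y, ∀ v ∈ Y, HasProperPath G c u v)
    (hZZ : ∀ u ∈ Z, ∀ v ∈ Z, HasProperPath G c u v)
    (hYX : ∀ u ∈ Y, ∀ v ∈ X, HasProperPath G c u v)
    (hXZ : ∀ u ∈ X, ∀ v ∈ Z, HasProperPath G c u v)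
    (hYZ : ∀ u ∈ Y, ∀ v ∈ Z, HasProperPath G c u v) :
    ProperlyConnected G c := by
  intro u v _
  show HasProperPath G c u v
  rcases hcov u with hu | hu | hu <;> rcases hcov v with hv | hv | hv
  · exact hXX u hu v hv
  · exact (hYX v hv u hu).symm
  · exact hXZ u hu v hv
  · exact hYX u hu v hv
  · exact hYY u hu v hv
  · exact hYZ u hu v hv
  · exact (hXZ v hv u hu).symm
  · exact (hYZ v hv u hu).symm
  · exact hZZ u hu v hv

theorem pcOpt_le_of_recolored_subset {c : Sym2 V → ℕ} (hc : ProperlyConnected G c)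
    {s : Finset (Sym2 V)} (hs : {e | e ∈ G.edgeSet ∧ c e ≠ 1} ⊆ s) :
    pcOpt G ≤ 2 * s.card := by
  set R := {e | e ∈ G.edgeSet ∧ c e ≠ 1}
  have hR : R.ncard ≤ s.card := by simpa using Set.ncard_le_ncard hs s.finite_toSet
  have hcR : (c '' R).ncard ≤ R.ncard := Set.ncard_image_le (s.finite_toSet.subset hs)
  calc pcOpt G ≤ R.ncard + (c '' R).ncard := Nat.sInf_le ⟨c, hc, rfl⟩
    _ ≤ 2 * s.card := by omega

theorem pcOpt_le_four_of_adjBetween {X Y Z : Set V} (hX : G.IsClique X) (hY : G.IsClique Y)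
    (hZ : G.IsClique Z) (hXY : Disjoint X Y) (hXZ : Disjoint X Z) (hYZ : Disjoint Y Z)
    (hcov : ∀ v, v ∈ X ∨ v ∈ Y ∨ v ∈ Z) (hadjY : AdjBetween G X Y)
    (hadjZ : AdjBetween G X Z) : pcOpt G ≤ 4 := by
  classical
  obtain ⟨x₀, hx₀, y₀, hy₀, h₀⟩ := hadjY
  obtain ⟨x₁, hx₁, z₁, hz₁, h₁⟩ := hadjZ
  let c : Sym2 V → ℕ := fun e => if e = s(x₀, y₀) then 2 else if e = s(x₁, z₁) then 3 else 1
  have hc₂ : c s(y₀, x₀) = 2 := by simp [c, Sym2.eq_swap]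
  have hc₃ : c s(x₁, z₁) = 3 := by
    have : s(x₁, z₁) ≠ s(x₀, y₀) := by
      rintro h
      rcases Sym2.eq_iff.1 h with ⟨-, rfl⟩ | ⟨rfl, -⟩
      exacts [hYZ.notMem_of_mem_right hz₁ hy₀, hXY.notMem_of_mem_right hy₀ hx₁]
    simp [c, this]
  have hcell (S : Set V) (h₀S : x₀ ∉ S ∨ y₀ ∉ S) (h₁S : x₁ ∉ S ∨ z₁ ∉ S) :
      ∀ u ∈ S, ∀ v ∈ S, c s(u, v) = 1 := fun u hu v hv => by
    simp [c, Sym2.mk_ne_of_mem_of_not_mem hu hv h₀S, Sym2.mk_ne_of_mem_of_not_mem hu hv h₁S]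
  have hcX := hcell X (.inr (hXY.notMem_of_mem_right hy₀)) (.inr (hXZ.notMem_of_mem_right hz₁))
  have hcY := hcell Y (.inl (hXY.notMem_of_mem_left hx₀)) (.inl (hXY.notMem_of_mem_left hx₁))
  have hcZ := hcell Z (.inl (hXZ.notMem_of_mem_left hx₀)) (.inl (hXZ.notMem_of_mem_left hx₁))
  have pathYX : ∀ u ∈ Y, ∀ v ∈ X, ∃ p : G.Walk u v, IsProperPathIn c (Y ∪ X) {2, 1} p := by
    intro u hu v hv
    obtain ⟨p, hp⟩ := hY.exists_isProperPathIn hcY hu hy₀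
    obtain ⟨q, hq⟩ := hX.exists_isProperPathIn hcX hx₀ hv
    exact ⟨_, by simpa using hp.append_cons hq hXY.symm h₀.symm hc₂ (by simp) (by simp)⟩
  have pathXZ : ∀ u ∈ X, ∀ v ∈ Z, HasProperPath G c u v := by
    intro u hu v hv
    obtain ⟨p, hp⟩ := hX.exists_isProperPathIn hcX hu hx₁
    obtain ⟨q, hq⟩ := hZ.exists_isProperPathIn hcZ hz₁ hv
    exact (hp.append_cons hq hXZ h₁ hc₃ (by simp) (by simp)).hasProperPath
  have pathYZ : ∀ u ∈ Y, ∀ v ∈ Z, HasProperPath G c u v := by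
    intro u hu v hv
    obtain ⟨p, hp⟩ := pathYX u hu x₁ hx₁
    obtain ⟨q, hq⟩ := hZ.exists_isProperPathIn hcZ hz₁ hv
    exact (hp.append_cons hq (Set.disjoint_union_left.2 ⟨hYZ, hXZ⟩) h₁ hc₃ (by simp)
      (by simp)).hasProperPath
  have hpc : ProperlyConnected G c :=
    properlyConnected_of_cover hcov (fun _ hu _ hv => hX.hasProperPath hcX hu hv)
      (fun _ hu _ hv => hY.hasProperPath hcY hu hv) (fun _ hu _ hv => hZ.hasProperPath hcZ hu hv)
      (fun u hu v hv => (pathYX u hu v hv).elim fun _ hp => hp.hasProperPath) pathXZ pathYZ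
  have hrec : {e | e ∈ G.edgeSet ∧ c e ≠ 1} ⊆ ({s(x₀, y₀), s(x₁, z₁)} : Finset _) := by
    rintro e ⟨-, he⟩
    simp only [c] at he
    split_ifs at he <;> simp_all
  calc pcOpt G ≤ 2 * ({s(x₀, y₀), s(x₁, z₁)} : Finset _).card :=
        pcOpt_le_of_recolored_subset hpc hrec
    _ ≤ 4 := by linarith [Finset.card_le_two (a := s(x₀, y₀)) (b := s(x₁, z₁))]

end

theorem pcOpt_le_four_of_three_cliques_general {V : Type*} (G : SimpleGraph V)
    (hG : G.Connected) (hα : indepNum G = 3) (A B C : Set V)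
    (hA : G.IsClique A) (hB : G.IsClique B) (hC : G.IsClique C)
    (hAB : Disjoint A B) (hAC : Disjoint A C) (hBC : Disjoint B C)
    (hcover : A ∪ B ∪ C = Set.univ) : pcOpt G ≤ 4 := by
  have hcovA : ∀ v, v ∈ A ∨ v ∈ B ∨ v ∈ C := fun v => by
    simpa [or_assoc] using hcover.ge (Set.mem_univ v)
  have hcovB : ∀ v, v ∈ B ∨ v ∈ A ∨ v ∈ C := fun v => by have := hcovA v; tauto
  have hcovC : ∀ v, v ∈ C ∨ v ∈ A ∨ v ∈ B := fun v => by have := hcovA v; tauto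
  have hA₀ := nonempty_of_indepNum_eq_three hα hB hC hcovA
  have hB₀ := nonempty_of_indepNum_eq_three hα hA hC hcovB
  have hC₀ := nonempty_of_indepNum_eq_three hα hA hB hcovC
  rcases hub_of_three (R := AdjBetween G) AdjBetween.symm (hG.adjBetween_or hA₀ hB₀ hAB hcovA)
      (hG.adjBetween_or hB₀ hA₀ hAB.symm hcovB) (hG.adjBetween_or hC₀ hA₀ hAC.symm hcovC)
    with ⟨hab, hac⟩ | ⟨hba, hbc⟩ | ⟨hca, hcb⟩
  · exact pcOpt_le_four_of_adjBetween hA hB hC hAB hAC hBC hcovA hab hac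
  · exact pcOpt_le_four_of_adjBetween hB hA hC hAB.symm hBC hAC hcovB hba hbc
  · exact pcOpt_le_four_of_adjBetween hC hA hB hAC.symm hBC.symm hAB hcovC hca hcb

/-- If `G` is connected with `α(G) = 3` and `V(G)` can be partitioned into three
cliques, then `pc_opt(G) ≤ 4`. -/
theorem pcOpt_le_four_of_three_cliques {V : Type*} [Fintype V] (G : SimpleGraph V)
    (hG : G.Connected) (hα : indepNum G = 3) (A B C : Set V)
    (hA : G.IsClique A) (hB : G.IsClique B) (hC : G.IsClique C)
    (hAB : Disjoint A B) (hAC : Disjoint A C) (hBC : Disjoint B C)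
    (hcover : A ∪ B ∪ C = Set.univ) : pcOpt G ≤ 4 :=
  pcOpt_le_four_of_three_cliques_general G hG hα A B C hA hB hC hAB hAC hBC hcover
end

section
/- Let G be a connected simple graph with α(G) = 3. If the vertex set of G can be partitioned into four cliques and there is a matching M of G of size three such that the four disjoint cliques together with the edges of M form a connected spanning subgraph of G, then pc_opt(G) ≤ 4. -/
section

open SimpleGraph

variable {V : Type*}

def MonochromaticCherriesClosed {α : Type*} (H : SimpleGraph V) (c : Sym2 V → α) : Prop :=
  ∀ ⦃a b x⦄, H.Adj a b → H.Adj b x → c s(a, b) = c s(b, x) → a ≠ x → H.Adj a x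

section ProperPaths

variable {α : Type*} {H : SimpleGraph V} {c : Sym2 V → α}

/-- If `u` lies on the path we cut the path there; otherwise a first edge `w x` clashing in colour
with `u w` is bypassed through the shortcut `u x`, and we recurse on the rest of the path. -/
theorem SimpleGraph.Walk.exists_properPath_of_adj [DecidableEq V]
    (hshort : MonochromaticCherriesClosed H c)
    {w v : V} (q : H.Walk w v) (hq : q.IsPath) (hqc : (q.edges.map c).IsChain (· ≠ ·))
    {u : V} (hu : H.Adj u w) :
    ∃ r : H.Walk u v, r.IsPath ∧ (r.edges.map c).IsChain (· ≠ ·) := by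
  induction q generalizing u with
  | nil => exact ⟨.cons hu .nil, by simp [hu.ne], by simp⟩
  | @cons w x v hwx q ih =>
    by_cases hus : u ∈ (Walk.cons hwx q).support
    · exact ⟨_, hq.dropUntil hus,
        hqc.suffix ((Walk.edges_dropUntil_suffix_edges _ hus).map c)⟩
    by_cases hcol : c s(u, w) = c s(w, x)
    · have hux : u ≠ x := fun h => hus (by simp [h])
      simp only [Walk.edges_cons, List.map_cons] at hqc
      exact ih hq.of_cons hqc.tail (hshort hu hwx hcol hux)
    · refine ⟨.cons hu (.cons hwx q), hq.cons hus, ?_⟩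
      simp only [Walk.edges_cons, List.map_cons] at hqc ⊢
      exact hqc.cons_cons hcol

theorem SimpleGraph.Walk.exists_properPath
    (hshort : MonochromaticCherriesClosed H c)
    {u v : V} (p : H.Walk u v) :
    ∃ r : H.Walk u v, r.IsPath ∧ (r.edges.map c).IsChain (· ≠ ·) := by
  classical
  induction p with
  | nil => exact ⟨.nil, by simp, by simp⟩
  | cons h _ ih =>
    obtain ⟨q, hq, hqc⟩ := ih
    exact q.exists_properPath_of_adj hshort hq hqc h

end ProperPaths

theorem properlyConnected_of_connected {H : SimpleGraph V} {c : Sym2 V → ℕ} (hH : H.Connected)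
    (hshort : MonochromaticCherriesClosed H c) :
    ProperlyConnected H c := fun u v _ =>
  (hH.preconnected u v).some.exists_properPath hshort

theorem ProperlyConnected.mono {H G : SimpleGraph V} {c : Sym2 V → ℕ} (hHG : H ≤ G)
    (hH : ProperlyConnected H c) : ProperlyConnected G c := by
  intro u v huv
  obtain ⟨p, hp, hpc⟩ := hH u v huv
  exact ⟨p.mapLe hHG, (Walk.isPath_mapLe hHG).mpr hp, by rwa [Walk.edges_mapLe_eq_edges]⟩

def recolorOn [DecidableEq V] (M : Finset (Sym2 V)) (e : Sym2 V) : ℕ :=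
  if e ∈ M then 2 else 1

theorem recolorOn_eq_recolorOn_iff [DecidableEq V] {M : Finset (Sym2 V)} {e f : Sym2 V} :
    recolorOn M e = recolorOn M f ↔ (e ∈ M ↔ f ∈ M) := by
  unfold recolorOn
  split_ifs <;> simp_all

theorem pcOpt_le_card_add_one [DecidableEq V] {G : SimpleGraph V} {M : Finset (Sym2 V)}
    (hME : ↑M ⊆ G.edgeSet) (hM : ProperlyConnected G (recolorOn M)) : pcOpt G ≤ M.card + 1 := by
  have hrecolored : {e | e ∈ G.edgeSet ∧ recolorOn M e ≠ 1} = ↑M := by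
    ext e
    by_cases he : e ∈ M
    · simp [recolorOn, he, hME he]
    · simp [recolorOn, he]
  have himage : recolorOn M '' ↑M ⊆ {2} := by
    rintro _ ⟨e, he, rfl⟩
    simp [recolorOn, show e ∈ M from he]
  calc pcOpt G
      ≤ {e | e ∈ G.edgeSet ∧ recolorOn M e ≠ 1}.ncard
        + (recolorOn M '' {e | e ∈ G.edgeSet ∧ recolorOn M e ≠ 1}).ncard :=
        Nat.sInf_le ⟨_, hM, rfl⟩
    _ ≤ M.card + 1 := by
        rw [hrecolored, Set.ncard_coe_finset]
        gcongr
        simpa using Set.ncard_le_ncard himage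

def cliqueMatchingGraph (G : SimpleGraph V) (𝒳 : Set (Set V)) (M : Set (Sym2 V)) :
    SimpleGraph V :=
  fromEdgeSet ({e | e ∈ G.edgeSet ∧ ∃ X ∈ 𝒳, ∀ v ∈ e, v ∈ X} ∪ M)

section CliqueMatchingGraph

variable {G : SimpleGraph V} {𝒳 : Set (Set V)} {M : Finset (Sym2 V)}

theorem cliqueMatchingGraph_le (hME : ↑M ⊆ G.edgeSet) : cliqueMatchingGraph G 𝒳 ↑M ≤ G := by
  rintro a b ⟨hab | hab, -⟩
  exacts [hab.1, hME hab]

theorem cliqueMatchingGraph_adj_of_not_mem {a b : V} (hab : (cliqueMatchingGraph G 𝒳 ↑M).Adj a b)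
    (habM : s(a, b) ∉ M) : ∃ X ∈ 𝒳, a ∈ X ∧ b ∈ X := by
  obtain ⟨⟨-, X, hX, habX⟩ | habM', -⟩ := hab
  · exact ⟨X, hX, habX a (Sym2.mem_mk_left a b), habX b (Sym2.mem_mk_right a b)⟩
  · exact absurd habM' habM

theorem cliqueMatchingGraph_monochromaticCherriesClosed [DecidableEq V]
    (h𝒳 : 𝒳.PairwiseDisjoint id) (hcliques : ∀ X ∈ 𝒳, G.IsClique X)
    (hmatching : ∀ e ∈ M, ∀ f ∈ M, e ≠ f → ∀ v : V, v ∈ e → v ∉ f) :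
    MonochromaticCherriesClosed (cliqueMatchingGraph G 𝒳 ↑M) (recolorOn M) := by
  intro a b x hab hbx hcol hax
  rw [recolorOn_eq_recolorOn_iff] at hcol
  by_cases habM : s(a, b) ∈ M
  · have hne : s(a, b) ≠ s(b, x) := by simp [hax, hab.ne]
    exact absurd (Sym2.mem_mk_left b x)
      (hmatching _ habM _ (hcol.mp habM) hne b (Sym2.mem_mk_right a b))
  obtain ⟨X, hX, haX, hbX⟩ := cliqueMatchingGraph_adj_of_not_mem hab habM
  obtain ⟨Y, hY, hbY, hxY⟩ := cliqueMatchingGraph_adj_of_not_mem hbx (hcol.not.mp habM)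
  obtain rfl : X = Y := h𝒳.elim_set hX hY b hbX hbY
  refine ⟨Or.inl ⟨hcliques X hX haX hxY hax, X, hX, ?_⟩, hax⟩
  rintro v hv
  rcases Sym2.mem_iff.mp hv with rfl | rfl <;> assumption

end CliqueMatchingGraph

end

theorem pcOpt_le_four_of_four_cliques_and_matching_general {V : Type*}
    (G : SimpleGraph V)
    (A B C D : Set V)
    (hA : G.IsClique A) (hB : G.IsClique B) (hC : G.IsClique C) (hD : G.IsClique D)
    (hAB : Disjoint A B) (hAC : Disjoint A C) (hAD : Disjoint A D)
    (hBC : Disjoint B C) (hBD : Disjoint B D) (hCD : Disjoint C D)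
    (M : Finset (Sym2 V)) (hME : ↑M ⊆ G.edgeSet) (hMcard : M.card = 3)
    (hmatching : ∀ e ∈ M, ∀ f ∈ M, e ≠ f → ∀ v : V, v ∈ e → v ∉ f)
    (hconn : (SimpleGraph.fromEdgeSet
      ({e | e ∈ G.edgeSet ∧ ∃ X ∈ ({A, B, C, D} : Set (Set V)), ∀ v ∈ e, v ∈ X}
        ∪ ↑M)).Connected) :
    pcOpt G ≤ 4 := by
  classical
  have hdisjoint : ({A, B, C, D} : Set (Set V)).PairwiseDisjoint id := by
    simp [Set.pairwiseDisjoint_insert, hAB, hAC, hAD, hBC, hBD, hCD]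
  have hcliques : ∀ X ∈ ({A, B, C, D} : Set (Set V)), G.IsClique X := by
    simp [hA, hB, hC, hD]
  have hproper : ProperlyConnected G (recolorOn M) :=
    (properlyConnected_of_connected hconn
      (cliqueMatchingGraph_monochromaticCherriesClosed hdisjoint hcliques hmatching)).mono
      (cliqueMatchingGraph_le hME)
  simpa [hMcard] using pcOpt_le_card_add_one hME hproper

/-- If `G` is connected with `α(G) = 3`, `V(G)` can be partitioned into four
cliques, and there is a matching `M` of size three such that the four disjoint
cliques together with the edges of `M` form a connected spanning subgraph of
`G`, then `pc_opt(G) ≤ 4`. -/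
theorem pcOpt_le_four_of_four_cliques_and_matching {V : Type*} [Fintype V]
    (G : SimpleGraph V) (hG : G.Connected) (hα : indepNum G = 3)
    (A B C D : Set V)
    (hA : G.IsClique A) (hB : G.IsClique B) (hC : G.IsClique C) (hD : G.IsClique D)
    (hAB : Disjoint A B) (hAC : Disjoint A C) (hAD : Disjoint A D)
    (hBC : Disjoint B C) (hBD : Disjoint B D) (hCD : Disjoint C D)
    (hcover : A ∪ B ∪ C ∪ D = Set.univ)
    (M : Finset (Sym2 V)) (hME : ↑M ⊆ G.edgeSet) (hMcard : M.card = 3)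
    (hmatching : ∀ e ∈ M, ∀ f ∈ M, e ≠ f → ∀ v : V, v ∈ e → v ∉ f)
    (hconn : (SimpleGraph.fromEdgeSet
      ({e | e ∈ G.edgeSet ∧ ∃ X ∈ ({A, B, C, D} : Set (Set V)), ∀ v ∈ e, v ∈ X}
        ∪ ↑M)).Connected) :
    pcOpt G ≤ 4 :=
  pcOpt_le_four_of_four_cliques_and_matching_general G A B C D hA hB hC hD hAB hAC hAD hBC hBD hCD M
    hME hMcard hmatching hconn
end
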